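/- Let β ∈ 𝒜 and let c ∈ C_X(𝒜,β) satisfy c_β < 0. If ν ∈ ℝ^𝒜 satisfies condition (★) for c but ν is not an X-circuit of 𝒜, then c is not an edge generator of the cone C_X(𝒜,β). -/

import Mathlib

open Finset

/-- Dot product on `Fin n → ℝ`. -/
noncomputable def dotp {n : ℕ} (y x : Fin n → ℝ) : ℝ := ∑ i, y i * x i

/-- Support function `σ_X : ℝⁿ → ℝ ∪ {±∞}` of a set `X ⊆ ℝⁿ`. -/
noncomputable def suppFn {n : ℕ} (X : Set (Fin n → ℝ)) (y : Fin n → ℝ) : EReal :=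
  ⨆ x ∈ X, ((dotp y x : ℝ) : EReal)

/-- The linear map `𝒜 : ℝ^𝒜 → ℝⁿ`, `ν ↦ Σ_α ν_α α`. -/
noncomputable def Amap {n m : ℕ} (A : Fin m → Fin n → ℝ) (ν : Fin m → ℝ) : Fin n → ℝ :=
  fun j => ∑ i, ν i * A i j

/-- `N_β = {ν : ν_α ≥ 0 (α ≠ β), Σ ν_α = 0}`. -/
def Nbeta {m : ℕ} (b : Fin m) : Set (Fin m → ℝ) :=
  {ν | (∀ i, i ≠ b → 0 ≤ ν i) ∧ ∑ i, ν i = 0}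

/-- Two vectors are proportional if one is a scalar multiple of the other. -/
def Proportional {m : ℕ} (u v : Fin m → ℝ) : Prop :=
  ∃ t : ℝ, u = t • v ∨ v = t • u

/-- The augmented support function `ν ↦ σ_X(-𝒜ν)`. -/
noncomputable def sigA {n m : ℕ} (X : Set (Fin n → ℝ)) (A : Fin m → Fin n → ℝ)
    (ν : Fin m → ℝ) : EReal :=
  suppFn X (-(Amap A ν))

/-- The map `ν ↦ σ_X(-𝒜ν)` is affine on the segment `[ν1, ν2]`. -/
def SigmaAffineOnSeg {n m : ℕ} (X : Set (Fin n → ℝ)) (A : Fin m → Fin n → ℝ)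
    (ν1 ν2 : Fin m → ℝ) : Prop :=
  ∀ t : ℝ, t ∈ Set.Icc (0:ℝ) 1 →
    sigA X A (t • ν1 + (1 - t) • ν2) =
      (t : EReal) * sigA X A ν1 + ((1 - t : ℝ) : EReal) * sigA X A ν2

/-- `ν` is an `X`-circuit of `𝒜` (with negative index allowed only at `b`). -/
def IsXCircuit {n m : ℕ} (X : Set (Fin n → ℝ)) (A : Fin m → Fin n → ℝ)
    (b : Fin m) (ν : Fin m → ℝ) : Prop :=
  ν ∈ Nbeta b ∧ ν ≠ 0 ∧ sigA X A ν < ⊤ ∧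
  ¬ ∃ (ν1 ν2 : Fin m → ℝ) (θ : ℝ), ν1 ∈ Nbeta b ∧ ν2 ∈ Nbeta b ∧
      ¬ Proportional ν1 ν2 ∧ θ ∈ Set.Ioo (0:ℝ) 1 ∧
      ν = θ • ν1 + (1 - θ) • ν2 ∧ SigmaAffineOnSeg X A ν1 ν2

/-- All finite nonnegative combinations of elements of `S` (including `0`). -/
def coneHull {E : Type*} [AddCommMonoid E] [SMul ℝ E] (S : Set E) : Set E :=
  {x | ∃ (k : ℕ) (t : Fin k → ℝ) (v : Fin k → E),
    (∀ j, 0 ≤ t j) ∧ (∀ j, v j ∈ S) ∧ x = ∑ j, t j • v j}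

/-- `v` is an edge generator of the convex cone `K`. -/
def IsEdgeGenerator {E : Type*} [AddCommMonoid E] [SMul ℝ E] (K : Set E) (v : E) : Prop :=
  v ≠ 0 ∧ v ∈ K ∧ ∀ u ∈ K, ∀ w ∈ K, v = u + w →
    (∃ a : ℝ, 0 ≤ a ∧ u = a • v) ∧ (∃ b : ℝ, 0 ≤ b ∧ w = b • v)

/-- The `X`-AGE cone `C_X(𝒜, β)`, as a cone of coefficient vectors. -/
def AgeCone {n m : ℕ} (X : Set (Fin n → ℝ)) (A : Fin m → Fin n → ℝ) (b : Fin m) :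
    Set (Fin m → ℝ) :=
  {c | (∀ i, i ≠ b → 0 ≤ c i) ∧ ∀ x ∈ X, 0 ≤ ∑ i, c i * Real.exp (dotp (A i) x)}

/-- The `X`-SAGE cone `C_X(𝒜) = Σ_β C_X(𝒜, β)`. -/
def Sage {n m : ℕ} (X : Set (Fin n → ℝ)) (A : Fin m → Fin n → ℝ) : Set (Fin m → ℝ) :=
  {c | ∃ f : Fin m → (Fin m → ℝ), (∀ b, f b ∈ AgeCone X A b) ∧ c = ∑ b, f b}

/-- One summand of the relative entropy, with the conventions `0·log 0 = 0` and
`D = ∞` if `a > 0` while `c ≤ 0`. -/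
noncomputable def relEnt (a c : ℝ) : EReal :=
  if a = 0 then 0 else if 0 < c then ((a * Real.log (a / c) : ℝ) : EReal) else ⊤

/-- The relative entropy `D(ν_{∖β}, e · c_{∖β})`. -/
noncomputable def relEntSum {m : ℕ} (b : Fin m) (ν c : Fin m → ℝ) : EReal :=
  ∑ i ∈ Finset.univ.erase b, relEnt (ν i) (Real.exp 1 * c i)

/-- Condition (★): `ν ∈ N_β`, `ν ≠ 0`, `σ_X(-𝒜ν) + D(ν_{∖β}, e c_{∖β}) ≤ c_β`. -/
def StarCond {n m : ℕ} (X : Set (Fin n → ℝ)) (A : Fin m → Fin n → ℝ)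
    (b : Fin m) (c ν : Fin m → ℝ) : Prop :=
  ν ∈ Nbeta b ∧ ν ≠ 0 ∧ sigA X A ν + relEntSum b ν c ≤ (c b : EReal)

/-- The `λ`-witnessed AGE cone `C_X(𝒜, λ)` for a normalized `λ` with `λ_β = -1`. -/
noncomputable def WitnessCone {n m : ℕ} (X : Set (Fin n → ℝ)) (A : Fin m → Fin n → ℝ)
    (b : Fin m) (l : Fin m → ℝ) : Set (Fin m → ℝ) :=
  {c | (∀ i, i ≠ b → 0 ≤ c i) ∧
    (-(c b)) * Real.exp ((sigA X A l).toReal) ≤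
      ∏ i ∈ Finset.univ.filter (fun i => 0 < l i), (c i / l i) ^ (l i)}

/-- Normalized `X`-circuits in `N_β`. -/
def LambdaB {n m : ℕ} (X : Set (Fin n → ℝ)) (A : Fin m → Fin n → ℝ) (b : Fin m) :
    Set (Fin m → ℝ) :=
  {l | IsXCircuit X A b l ∧ l b = -1}

/-- All normalized `X`-circuits of `𝒜`. -/
def Lambda {n m : ℕ} (X : Set (Fin n → ℝ)) (A : Fin m → Fin n → ℝ) : Set (Fin m → ℝ) :=
  ⋃ b, LambdaB X A b

/-- Functional form `φ_λ = (λ, σ_X(-𝒜λ)) ∈ ℝ^𝒜 × ℝ`. -/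
noncomputable def phiVec {n m : ℕ} (X : Set (Fin n → ℝ)) (A : Fin m → Fin n → ℝ)
    (l : Fin m → ℝ) : (Fin m → ℝ) × ℝ :=
  (l, (sigA X A l).toReal)

/-- Functional form as an affine function `φ_λ(y) = Σ y_α λ_α + σ_X(-𝒜λ)`. -/
noncomputable def phiFun {n m : ℕ} (X : Set (Fin n → ℝ)) (A : Fin m → Fin n → ℝ)
    (l : Fin m → ℝ) (y : Fin m → ℝ) : ℝ :=
  (∑ i, y i * l i) + (sigA X A l).toReal

/-- The circuit graph `G_X(𝒜)`. -/
noncomputable def circuitGraph {n m : ℕ} (X : Set (Fin n → ℝ)) (A : Fin m → Fin n → ℝ) :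
    Set ((Fin m → ℝ) × ℝ) :=
  coneHull ((phiVec X A '' Lambda X A) ∪ {((0 : Fin m → ℝ), (1 : ℝ))})

/-- The reduced normalized `X`-circuits `Λ*_X(𝒜)`. -/
noncomputable def LambdaStar {n m : ℕ} (X : Set (Fin n → ℝ)) (A : Fin m → Fin n → ℝ) :
    Set (Fin m → ℝ) :=
  {l | l ∈ Lambda X A ∧ IsEdgeGenerator (circuitGraph X A) (phiVec X A l)}

/-- `λ`-witnessed AGE cone for a normalized circuit, with `β` recovered from `λ`. -/
noncomputable def WitnessConeL {n m : ℕ} (X : Set (Fin n → ℝ)) (A : Fin m → Fin n → ℝ)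
    (l : Fin m → ℝ) : Set (Fin m → ℝ) :=
  ⋃ b ∈ {b : Fin m | l b = -1}, WitnessCone X A b l

/-- Dual cone of a set of coefficient vectors in `ℝ^𝒜`. -/
def dualConeV {m : ℕ} (K : Set (Fin m → ℝ)) : Set (Fin m → ℝ) :=
  {v | ∀ c ∈ K, 0 ≤ ∑ i, v i * c i}

/-- Dual cone of a subset of `ℝ^𝒜 × ℝ`. -/
def dualConeP {m : ℕ} (K : Set ((Fin m → ℝ) × ℝ)) : Set ((Fin m → ℝ) × ℝ) :=
  {p | ∀ q ∈ K, 0 ≤ (∑ i, p.1 i * q.1 i) + p.2 * q.2}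

/-- The basis functions `x ↦ exp(αᵀx)`, `α ∈ 𝒜`, are linearly independent on `X`. -/
def ExpLinIndep {n m : ℕ} (X : Set (Fin n → ℝ)) (A : Fin m → Fin n → ℝ) : Prop :=
  LinearIndependent ℝ (fun i : Fin m => fun x : X => Real.exp (dotp (A i) (x : Fin n → ℝ)))

/-- `X` is a polyhedron: an intersection of finitely many closed halfspaces. -/
def IsPolyhedron {n : ℕ} (X : Set (Fin n → ℝ)) : Prop :=
  ∃ (k : ℕ) (a : Fin k → Fin n → ℝ) (bb : Fin k → ℝ),
    X = {x | ∀ i, dotp (a i) x ≤ bb i}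

/-- Minkowski sum `Σ_{l ∈ Λ} C(l)` (finite sums, one summand per `l`;
the empty sum gives `{0}`). -/
def MinkSumOver {m : ℕ} (Λ : Set (Fin m → ℝ)) (C : (Fin m → ℝ) → Set (Fin m → ℝ)) :
    Set (Fin m → ℝ) :=
  {c | ∃ (s : Finset (Fin m → ℝ)) (f : (Fin m → ℝ) → (Fin m → ℝ)),
    (↑s ⊆ Λ) ∧ (∀ l ∈ s, f l ∈ C l) ∧ c = ∑ l ∈ s, f l}

/-!
Write `ν = κ + μ` with `κ = θ ν¹`, `μ = (1-θ) ν²`, where `σ_X(-𝒜·)` is affine on `[ν¹, ν²]`, so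
that `σ_X(-𝒜ν) = σ_X(-𝒜κ) + σ_X(-𝒜μ)`. Splitting every coefficient `c_α` (`α ≠ β`) in the ratio
`κ_α : μ_α` splits the relative entropy `D(ν, e c)` additively as well, so (★) for `(c, ν)` yields
relative entropy certificates `(c¹, κ)` and `(c - c¹, μ)` for two AGE vectors with sum `c`.
If `c` spanned an edge, `c¹` would be a multiple of `c`, which forces `κ` and hence `ν¹`, `ν²`
to be multiples of `ν`, contradicting the choice of `ν¹, ν²`.
-/

lemma EReal.coe_finset_sum {ι : Type*} (s : Finset ι) (f : ι → ℝ) :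
    ((∑ i ∈ s, f i : ℝ) : EReal) = ∑ i ∈ s, (f i : EReal) :=
  map_sum (⟨⟨((↑) : ℝ → EReal), EReal.coe_zero⟩, EReal.coe_add⟩ : ℝ →+ EReal) f s

lemma EReal.finset_sum_eq_top {ι : Type*} {s : Finset ι} {f : ι → EReal} {i : ι}
    (hbot : ∀ j ∈ s, f j ≠ ⊥) (hi : i ∈ s) (htop : f i = ⊤) : ∑ j ∈ s, f j = ⊤ := by
  classical
  rw [← Finset.add_sum_erase s f hi, htop]
  refine EReal.top_add_of_ne_bot (Finset.sum_induction f (· ≠ ⊥) (fun x y hx hy => ?_)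
    EReal.zero_ne_bot fun j hj => hbot j (Finset.mem_of_mem_erase hj))
  rw [Ne, EReal.add_eq_bot_iff, not_or]
  exact ⟨hx, hy⟩

lemma EReal.exists_coe_of_mul_add_mul_eq_coe {s t S : ℝ} {z₁ z₂ : EReal} (hs : 0 < s)
    (ht : 0 < t) (h₁ : z₁ ≠ ⊥) (h₂ : z₂ ≠ ⊥) (h : (s : EReal) * z₁ + (t : EReal) * z₂ = S) :
    ∃ S₁ S₂ : ℝ, z₁ = S₁ ∧ z₂ = S₂ ∧ S = s * S₁ + t * S₂ := by
  induction z₁ using EReal.rec <;> induction z₂ using EReal.rec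
  all_goals simp_all [EReal.coe_mul_top_of_pos, ← EReal.coe_mul, ← EReal.coe_add]

lemma mul_sub_log_le_mul_exp {κ c : ℝ} (s : ℝ) (hκ : 0 ≤ κ) (hc : 0 ≤ c)
    (hpos : 0 < κ → 0 < c) : κ * (s - Real.log (κ / (Real.exp 1 * c))) ≤ c * Real.exp s := by
  rcases hκ.eq_or_lt with rfl | hκ
  · simpa using mul_nonneg hc (Real.exp_pos s).le
  have hc := hpos hκ
  set u := s - Real.log (κ / (Real.exp 1 * c))
  have hs : c * Real.exp s = κ * Real.exp (u - 1) := by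
    have hL : Real.exp (Real.log (κ / (Real.exp 1 * c))) = κ / (Real.exp 1 * c) :=
      Real.exp_log (by positivity)
    rw [show s = (u - 1) + 1 + Real.log (κ / (Real.exp 1 * c)) by ring, Real.exp_add,
      Real.exp_add, hL]
    field_simp
  rw [hs]
  exact mul_le_mul_of_nonneg_left (by linarith [Real.add_one_le_exp (u - 1)]) hκ.le

section Circuits

variable {n m : ℕ} {X : Set (Fin n → ℝ)} {A : Fin m → Fin n → ℝ} {b : Fin m}

lemma smul_mem_Nbeta {ν : Fin m → ℝ} {t : ℝ} (ht : 0 ≤ t) (hν : ν ∈ Nbeta b) :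
    t • ν ∈ Nbeta b :=
  ⟨fun i hi => mul_nonneg ht (hν.1 i hi), by simp [← Finset.mul_sum, hν.2]⟩

lemma eq_smul_of_forall_ne {κ ν : Fin m → ℝ} {a : ℝ} (hκ : ∑ i, κ i = 0) (hν : ∑ i, ν i = 0)
    (h : ∀ i, i ≠ b → κ i = a * ν i) : κ = a • ν := by
  funext i
  rcases eq_or_ne i b with rfl | hi
  · have hκ' := Finset.add_sum_erase univ κ (mem_univ i)
    have hν' := Finset.add_sum_erase univ ν (mem_univ i)
    have hs : ∑ j ∈ univ.erase i, κ j = a * ∑ j ∈ univ.erase i, ν j := by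
      rw [Finset.mul_sum]
      exact Finset.sum_congr rfl fun j hj => h j (Finset.ne_of_mem_erase hj)
    simp only [Pi.smul_apply, smul_eq_mul]
    linear_combination hκ' + hκ - hs - a * (hν' + hν)
  · exact h i hi

lemma Proportional.of_eq_smul {ν ν₁ ν₂ : Fin m → ℝ} {s t : ℝ} (h₁ : ν₁ = s • ν)
    (h₂ : ν₂ = t • ν) : Proportional ν₁ ν₂ := by
  rcases eq_or_ne s 0 with rfl | hs
  · exact ⟨0, Or.inl (by simp [h₁])⟩
  · exact ⟨t / s, Or.inr (by rw [h₁, h₂, smul_smul, div_mul_cancel₀ t hs])⟩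

lemma dotp_neg_Amap (κ : Fin m → ℝ) (x : Fin n → ℝ) :
    dotp (-(Amap A κ)) x = -∑ i, κ i * dotp (A i) x := by
  simp only [dotp, Amap, Pi.neg_apply, neg_mul, Finset.sum_neg_distrib, Finset.mul_sum,
    Finset.sum_mul]
  rw [Finset.sum_comm]
  simp only [mul_assoc]

lemma sigA_le_coe_iff {κ : Fin m → ℝ} {S : ℝ} :
    sigA X A κ ≤ S ↔ ∀ x ∈ X, -S ≤ ∑ i, κ i * dotp (A i) x := by
  simp only [sigA, suppFn, iSup₂_le_iff, EReal.coe_le_coe_iff, dotp_neg_Amap, neg_le]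

lemma sigA_ne_bot (hX : X.Nonempty) (κ : Fin m → ℝ) : sigA X A κ ≠ ⊥ := by
  obtain ⟨x, hx⟩ := hX
  exact ne_bot_of_le_ne_bot (EReal.coe_ne_bot _)
    (le_biSup (fun x => ((dotp (-(Amap A κ)) x : ℝ) : EReal)) hx)

lemma sigA_smul_le {κ : Fin m → ℝ} {t S : ℝ} (ht : 0 ≤ t) (h : sigA X A κ ≤ S) :
    sigA X A (t • κ) ≤ ((t * S : ℝ) : EReal) := by
  rw [sigA_le_coe_iff] at h ⊢
  intro x hx
  simp only [Pi.smul_apply, smul_eq_mul, mul_assoc, ← Finset.mul_sum]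
  nlinarith [h x hx]

/-- With `κ = ν` this is the relative entropy `D(ν_{∖β}, e·c_{∖β})` as soon as `c` is positive on
the support of `ν` (`relEntSum_eq_coe_crossEnt`). -/
noncomputable def crossEnt (b : Fin m) (κ ν c : Fin m → ℝ) : ℝ :=
  ∑ i ∈ univ.erase b, κ i * Real.log (ν i / (Real.exp 1 * c i))

lemma crossEnt_add_left (κ μ ν c : Fin m → ℝ) :
    crossEnt b (κ + μ) ν c = crossEnt b κ ν c + crossEnt b μ ν c := by
  simp only [crossEnt, Pi.add_apply, add_mul, Finset.sum_add_distrib]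

/-- No positivity is needed: where `c i = 0` or `ν i = 0` both sides vanish since `x / 0 = 0`. -/
lemma crossEnt_self_eq {κ ν c c' : Fin m → ℝ}
    (h : ∀ i, i ≠ b → κ i ≠ 0 → c' i = c i * κ i / ν i) :
    crossEnt b κ κ c' = crossEnt b κ ν c := by
  refine Finset.sum_congr rfl fun i hi => ?_
  rcases eq_or_ne (κ i) 0 with hκ | hκ
  · simp [hκ]
  rw [h i (Finset.ne_of_mem_erase hi) hκ]
  congr 2
  simp only [div_eq_mul_inv, mul_inv, inv_inv]
  linear_combination (ν i * (Real.exp 1)⁻¹ * (c i)⁻¹) * mul_inv_cancel₀ hκ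

lemma relEntSum_eq_coe_crossEnt {ν c : Fin m → ℝ} (hν : ν ∈ Nbeta b)
    (hc : ∀ i, i ≠ b → 0 < ν i → 0 < c i) : relEntSum b ν c = crossEnt b ν ν c := by
  rw [relEntSum, crossEnt, EReal.coe_finset_sum]
  refine Finset.sum_congr rfl fun i hi => ?_
  have hib := Finset.ne_of_mem_erase hi
  rcases (hν.1 i hib).eq_or_lt with h0 | hpos
  · simp [relEnt, ← h0]
  · have := hc i hib hpos
    rw [relEnt, if_neg hpos.ne', if_pos (by positivity)]

lemma relEntSum_eq_top {ν c : Fin m → ℝ} {i : Fin m} (hib : i ≠ b) (hν : 0 < ν i)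
    (hc : c i ≤ 0) : relEntSum b ν c = ⊤ := by
  refine EReal.finset_sum_eq_top (fun j _ => ?_) (Finset.mem_erase.2 ⟨hib, mem_univ i⟩) ?_
  · rw [relEnt]
    split_ifs <;> simp only [ne_eq, EReal.zero_ne_bot, EReal.coe_ne_bot, top_ne_bot,
      not_false_eq_true]
  · rw [relEnt, if_neg hν.ne', if_neg (by nlinarith [Real.exp_pos 1])]

lemma StarCond.exists_coe {c ν : Fin m → ℝ} (hX : X.Nonempty) (h : StarCond X A b c ν) :
    ∃ S : ℝ, sigA X A ν = S ∧ (∀ i, i ≠ b → 0 < ν i → 0 < c i) ∧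
      S + crossEnt b ν ν c ≤ c b := by
  obtain ⟨hν, -, hle⟩ := h
  have hbot := sigA_ne_bot hX (A := A) ν
  have hc : ∀ i, i ≠ b → 0 < ν i → 0 < c i := fun i hib hνi => by
    by_contra! hci
    rw [relEntSum_eq_top hib hνi hci, EReal.add_top_of_ne_bot hbot] at hle
    exact EReal.coe_ne_top _ (top_le_iff.1 hle)
  rw [relEntSum_eq_coe_crossEnt hν hc] at hle
  have htop : sigA X A ν ≠ ⊤ := fun h => by
    rw [h, EReal.top_add_coe] at hle
    exact EReal.coe_ne_top _ (top_le_iff.1 hle)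
  refine ⟨(sigA X A ν).toReal, (EReal.coe_toReal htop hbot).symm, hc, ?_⟩
  rwa [← EReal.coe_toReal htop hbot, ← EReal.coe_add, EReal.coe_le_coe_iff] at hle

/-- Sum the tangent-line bounds `κ_α (t - log (κ_α / (e c_α))) ≤ c_α eᵗ` at `t = (α - β)ᵀx`. -/
lemma mem_ageCone_of_crossEnt_le {κ c : Fin m → ℝ} {S : ℝ} (hκ : κ ∈ Nbeta b)
    (hc : ∀ i, i ≠ b → 0 ≤ c i) (hcpos : ∀ i, i ≠ b → 0 < κ i → 0 < c i)
    (hS : sigA X A κ ≤ S) (hb : S + crossEnt b κ κ c ≤ c b) : c ∈ AgeCone X A b := by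
  refine ⟨hc, fun x hx => ?_⟩
  set t : Fin m → ℝ := fun i => dotp (A i) x
  have hshift : ∑ i ∈ univ.erase b, κ i * (t i - t b) = ∑ i, κ i * t i := by
    rw [Finset.sum_erase _ (by simp)]
    simp [mul_sub, Finset.sum_sub_distrib, ← Finset.sum_mul, hκ.2]
  have hterm : ∀ i ∈ univ.erase b, κ i * (t i - t b) - κ i * Real.log (κ i / (Real.exp 1 * c i))
      ≤ c i * Real.exp (t i - t b) := fun i hi => by
    have hib := Finset.ne_of_mem_erase hi
    rw [← mul_sub]
    exact mul_sub_log_le_mul_exp _ (hκ.1 i hib) (hc i hib) (hcpos i hib)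
  have hsum := Finset.sum_le_sum hterm
  rw [Finset.sum_sub_distrib, hshift] at hsum
  have hfactor : ∑ i, c i * Real.exp (t i)
      = Real.exp (t b) * (c b + ∑ i ∈ univ.erase b, c i * Real.exp (t i - t b)) := by
    rw [← Finset.add_sum_erase _ _ (mem_univ b), mul_add, Finset.mul_sum]
    congr 1
    · ring
    · refine Finset.sum_congr rfl fun i _ => ?_
      rw [Real.exp_sub]
      field_simp
  rw [hfactor]
  have := sigA_le_coe_iff.1 hS x hx
  exact mul_nonneg (Real.exp_pos _).le (by unfold crossEnt at hb; linarith)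

noncomputable def splitCoeff (b : Fin m) (c κ ν : Fin m → ℝ) (s : ℝ) : Fin m → ℝ :=
  Function.update (fun i => c i * κ i / ν i) b s

lemma eq_smul_of_splitCoeff_eq_smul {κ μ c : Fin m → ℝ} {s a : ℝ} (hκ : κ ∈ Nbeta b)
    (hμ : μ ∈ Nbeta b) (hcpos : ∀ i, i ≠ b → 0 < κ i + μ i → 0 < c i)
    (h : splitCoeff b c κ (κ + μ) s = a • c) : κ = a • (κ + μ) := by
  refine eq_smul_of_forall_ne (b := b) hκ.2 (by simp [Finset.sum_add_distrib, hκ.2, hμ.2])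
    fun i hib => ?_
  have hi := congrFun h i
  rw [splitCoeff, Function.update_of_ne hib, Pi.smul_apply, smul_eq_mul] at hi
  have := hκ.1 i hib
  have := hμ.1 i hib
  rcases (add_nonneg (hκ.1 i hib) (hμ.1 i hib)).eq_or_lt with h0 | hνi
  · have hκi : κ i = 0 := by linarith
    have hμi : μ i = 0 := by linarith
    simp [hκi, hμi]
  · have := hcpos i hib hνi
    simp only [Pi.add_apply] at hi ⊢
    field_simp at hi
    linear_combination hi

lemma exists_ageCone_split {κ μ c : Fin m → ℝ} {S₁ S₂ : ℝ} (hκ : κ ∈ Nbeta b)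
    (hμ : μ ∈ Nbeta b) (hc : ∀ i, i ≠ b → 0 ≤ c i)
    (hcpos : ∀ i, i ≠ b → 0 < κ i + μ i → 0 < c i)
    (hS₁ : sigA X A κ ≤ S₁) (hS₂ : sigA X A μ ≤ S₂)
    (hb : S₁ + S₂ + crossEnt b (κ + μ) (κ + μ) c ≤ c b) :
    ∃ c₁, c₁ ∈ AgeCone X A b ∧ c - c₁ ∈ AgeCone X A b ∧
      ∀ a : ℝ, c₁ = a • c → κ = a • (κ + μ) := by
  set ν := κ + μ
  set c₁ := splitCoeff b c κ ν (S₁ + crossEnt b κ ν c)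
  have hc₁ : ∀ i, i ≠ b → c₁ i = c i * κ i / ν i := fun i hib => Function.update_of_ne hib _ _
  have hc₂ : ∀ i, i ≠ b → 0 < ν i → (c - c₁) i = c i * μ i / ν i := fun i hib hν => by
    rw [Pi.sub_apply, hc₁ i hib]
    field_simp
    simp only [ν, Pi.add_apply]
    ring
  have hν : ∀ i, i ≠ b → 0 ≤ ν i := fun i hib => add_nonneg (hκ.1 i hib) (hμ.1 i hib)
  have hνκ : ∀ i, i ≠ b → 0 < κ i → 0 < ν i := fun i hib hκi => by
    have := hμ.1 i hib; simp only [ν, Pi.add_apply]; positivity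
  have hνμ : ∀ i, i ≠ b → 0 < μ i → 0 < ν i := fun i hib hμi => by
    have := hκ.1 i hib; simp only [ν, Pi.add_apply]; positivity
  rw [crossEnt_add_left] at hb
  refine ⟨c₁, ?_, ?_, fun a => eq_smul_of_splitCoeff_eq_smul hκ hμ hcpos⟩
  · refine mem_ageCone_of_crossEnt_le hκ (fun i hib => ?_) (fun i hib hκi => ?_) hS₁ ?_
    · have := hκ.1 i hib; have := hν i hib; have := hc i hib
      rw [hc₁ i hib]
      positivity
    · have := hcpos i hib (hνκ i hib hκi)
      have := hνκ i hib hκi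
      rw [hc₁ i hib]
      positivity
    · rw [crossEnt_self_eq fun i hib _ => hc₁ i hib]
      simp [c₁, splitCoeff]
  · refine mem_ageCone_of_crossEnt_le hμ (fun i hib => ?_) (fun i hib hμi => ?_) hS₂ ?_
    · rcases (hν i hib).eq_or_lt with h0 | hνi
      · simp [hc₁ i hib, ← h0, hc i hib]
      · have := hμ.1 i hib; have := hc i hib
        rw [hc₂ i hib hνi]
        positivity
    · have := hcpos i hib (hνμ i hib hμi)
      have := hνμ i hib hμi
      rw [hc₂ i hib (hνμ i hib hμi)]
      positivity
    · rw [crossEnt_self_eq (ν := ν) (c := c) fun i hib hμi =>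
        hc₂ i hib (hνμ i hib ((hμ.1 i hib).lt_of_ne' hμi))]
      simp only [c₁, splitCoeff, Pi.sub_apply, Function.update_self]
      linarith

end Circuits

theorem statement4_general {n m : ℕ} (X : Set (Fin n → ℝ)) (hXne : X.Nonempty)
    (A : Fin m → Fin n → ℝ)
    (b : Fin m) (c ν : Fin m → ℝ)
    (hc : c ∈ AgeCone X A b)
    (hstar : StarCond X A b c ν)
    (hnotcirc : ¬ IsXCircuit X A b ν) :
    ¬ IsEdgeGenerator (AgeCone X A b) c := by
  rintro ⟨-, -, hedge⟩
  obtain ⟨S, hS, hcpos, hSc⟩ := hstar.exists_coe hXne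
  obtain ⟨ν₁, ν₂, θ, hν₁, hν₂, hnprop, ⟨hθ₀, hθ₁⟩, hν, haff⟩ :
      ∃ (ν₁ ν₂ : Fin m → ℝ) (θ : ℝ), ν₁ ∈ Nbeta b ∧ ν₂ ∈ Nbeta b ∧
        ¬ Proportional ν₁ ν₂ ∧ θ ∈ Set.Ioo (0 : ℝ) 1 ∧
        ν = θ • ν₁ + (1 - θ) • ν₂ ∧ SigmaAffineOnSeg X A ν₁ ν₂ := by
    by_contra h
    exact hnotcirc ⟨hstar.1, hstar.2.1, hS ▸ EReal.coe_lt_top S, h⟩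
  have hθ₁' : 0 ≤ 1 - θ := by linarith
  obtain ⟨S₁, S₂, h₁, h₂, hS₁₂⟩ := EReal.exists_coe_of_mul_add_mul_eq_coe hθ₀ (sub_pos.2 hθ₁)
    (sigA_ne_bot hXne ν₁) (sigA_ne_bot hXne ν₂) (by rw [← haff θ ⟨hθ₀.le, hθ₁.le⟩, ← hν, hS])
  obtain ⟨c₁, hc₁, hc₂, hsplit⟩ := exists_ageCone_split (smul_mem_Nbeta hθ₀.le hν₁)
    (smul_mem_Nbeta hθ₁' hν₂) hc.1 (fun i hib hi => hcpos i hib (by simpa [hν] using hi))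
    (sigA_smul_le hθ₀.le h₁.le) (sigA_smul_le hθ₁' h₂.le) (by rw [← hν]; linarith)
  obtain ⟨⟨a, -, ha⟩, -⟩ := hedge c₁ hc₁ (c - c₁) hc₂ (add_sub_cancel c₁ c).symm
  have hκ : θ • ν₁ = a • ν := hν ▸ hsplit a ha
  have hμ : (1 - θ) • ν₂ = (1 - a) • ν := by
    rw [sub_smul 1 a ν, one_smul, ← hκ, hν, add_sub_cancel_left]
  refine hnprop (Proportional.of_eq_smul (ν := ν) (s := a / θ) (t := (1 - a) / (1 - θ)) ?_ ?_)
  · rw [div_eq_inv_mul, mul_smul, ← hκ, inv_smul_smul₀ hθ₀.ne']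
  · rw [div_eq_inv_mul, mul_smul, ← hμ, inv_smul_smul₀ (by linarith : (1 - θ) ≠ 0)]

theorem statement4 {n m : ℕ} (X : Set (Fin n → ℝ)) (hXne : X.Nonempty) (hXcl : IsClosed X)
    (hXcv : Convex ℝ X) (A : Fin m → Fin n → ℝ) (hA : Function.Injective A) (hm : 0 < m)
    (b : Fin m) (c ν : Fin m → ℝ)
    (hc : c ∈ AgeCone X A b) (hcb : c b < 0)
    (hstar : StarCond X A b c ν)
    (hnotcirc : ¬ IsXCircuit X A b ν) :
    ¬ IsEdgeGenerator (AgeCone X A b) c :=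
  statement4_general X hXne A b c ν hc hstar hnotcirc
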